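/- arXiv:1807.04969 — 4 statements merged into one kernel-verified Lean document; each statement's English description precedes it below -/
import Mathlib

section
/- Let G be a graph containing vertex-disjoint paths P_1,...,P_a and vertex-disjoint trees T_1,...,T_b such that for all i and j the intersection P_i ∩ T_j is nonempty. Then the collection B = { T_j ∪ P_i : i ∈ [a], j ∈ [b] } is a bramble in G of order at least min(a, b). -/
/-!
Every two sets `P i ∪ T j` and `P i' ∪ T j'` share a vertex of `P i ∩ T j'`, and each is connected
because its two connected parts meet. A set `W` hitting all of them either meets every `P i` or
misses some `P i`, and then must meet every `T j` inside `P i ∪ T j`; since the paths (resp. trees)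
are disjoint, `W` has at least `a` (resp. `b`) vertices.
-/

/-- A bramble in `G`: a collection of nonempty vertex sets of connected subgraphs
of `G` such that any two of its sets touch (intersect or are joined by an edge). -/
def IsBramble {V : Type} (G : SimpleGraph V) (B : Set (Set V)) : Prop :=
  ∀ S ∈ B, S.Nonempty ∧ (G.induce S).Connected ∧
    ∀ S' ∈ B, (S ∩ S').Nonempty ∨ ∃ u ∈ S, ∃ v ∈ S', G.Adj u v

open Function SimpleGraph

section Hitting

variable {V ι κ : Type*} [Fintype ι] [Fintype κ]

theorem card_le_card_of_forall_exists_mem_of_pairwise_disjoint {s : ι → Set V}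
    (hs : Pairwise (Disjoint on s)) {W : Finset V} (hW : ∀ i, ∃ v ∈ s i, v ∈ W) :
    Fintype.card ι ≤ W.card := by
  choose g hgs hgW using hW
  have hg : Injective g := fun i i' h =>
    hs.eq (Set.not_disjoint_iff.2 ⟨g i, hgs i, h ▸ hgs i'⟩)
  rw [← Finset.card_univ]
  exact Finset.card_le_card_of_injOn g (fun i _ => hgW i) hg.injOn

theorem min_card_le_card_of_forall_exists_mem_union {A : ι → Set V} {B : κ → Set V}
    (hA : Pairwise (Disjoint on A)) (hB : Pairwise (Disjoint on B)) {W : Finset V}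
    (hW : ∀ i j, ∃ v ∈ A i ∪ B j, v ∈ W) :
    min (Fintype.card ι) (Fintype.card κ) ≤ W.card := by
  by_cases hWA : ∀ i, ∃ v ∈ A i, v ∈ W
  · exact min_le_left _ _ |>.trans
      (card_le_card_of_forall_exists_mem_of_pairwise_disjoint hA hWA)
  · obtain ⟨i, hi⟩ := not_forall.1 hWA
    have hWB : ∀ j, ∃ v ∈ B j, v ∈ W := fun j => by
      obtain ⟨v, hv | hv, hvW⟩ := hW i j
      · exact absurd ⟨v, hv, hvW⟩ hi
      · exact ⟨v, hv, hvW⟩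
    exact min_le_right _ _ |>.trans
      (card_le_card_of_forall_exists_mem_of_pairwise_disjoint hB hWB)

end Hitting

theorem isBramble_union_of_inter_nonempty {V ι κ : Type} {G : SimpleGraph V}
    {A : ι → Set V} {B : κ → Set V} (hA : ∀ i, (G.induce (A i)).Preconnected)
    (hB : ∀ j, (G.induce (B j)).Preconnected) (hAB : ∀ i j, (A i ∩ B j).Nonempty) :
    IsBramble G {S | ∃ i j, S = A i ∪ B j} := by
  rintro _ ⟨i, j, rfl⟩
  refine ⟨(hAB i j).mono (Set.inter_subset_left.trans Set.subset_union_left),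
    induce_union_connected (hA i) (hB j) (hAB i j), ?_⟩
  rintro _ ⟨i', j', rfl⟩
  exact .inl <| (hAB i j').mono <| Set.inter_subset_inter Set.subset_union_left
    Set.subset_union_right

theorem bramble_of_paths_and_trees_general {V : Type} (G : SimpleGraph V) (a b : ℕ)
    (pu pv : Fin a → V) (P : (i : Fin a) → G.Walk (pu i) (pv i))
    (hPdisj : ∀ i i', i ≠ i' → ∀ v, v ∈ (P i).support → v ∉ (P i').support)
    (T : Fin b → SimpleGraph.Subgraph G) (hT : ∀ j, (T j).coe.IsTree)
    (hTdisj : ∀ j j', j ≠ j' → Disjoint (T j).verts (T j').verts)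
    (hmeet : ∀ i j, ∃ v, v ∈ (P i).support ∧ v ∈ (T j).verts) :
    IsBramble G {S | ∃ i j, S = {v | v ∈ (P i).support} ∪ (T j).verts} ∧
    ∀ W : Finset V,
      (∀ S ∈ {S | ∃ i j, S = {v | v ∈ (P i).support} ∪ (T j).verts}, ∃ v ∈ S, v ∈ W) →
      min a b ≤ W.card := by
  have hPconn i : (G.induce {v | v ∈ (P i).support}).Preconnected :=
    (P i).connected_induce_support.preconnected
  have hTconn j : (G.induce (T j).verts).Preconnected :=
    (Subgraph.connected_iff'.2 (hT j).connected).induce_verts.preconnected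
  have hPdisj' : Pairwise (Disjoint on fun i => {v | v ∈ (P i).support}) := fun i i' h =>
    Set.disjoint_left.2 (hPdisj i i' h)
  refine ⟨isBramble_union_of_inter_nonempty hPconn hTconn hmeet, fun W hW => ?_⟩
  simpa only [Fintype.card_fin] using min_card_le_card_of_forall_exists_mem_union hPdisj' hTdisj
    (fun i j => hW _ ⟨i, j, rfl⟩)

/-- If `G` contains vertex-disjoint paths `P_1, …, P_a` and vertex-disjoint trees
`T_1, …, T_b` such that every `P i` meets every `T j`, then the collection
`{ T j ∪ P i }` is a bramble of order at least `min a b`. -/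
theorem bramble_of_paths_and_trees {V : Type} (G : SimpleGraph V) (a b : ℕ)
    (pu pv : Fin a → V) (P : (i : Fin a) → G.Walk (pu i) (pv i))
    (hP : ∀ i, (P i).IsPath)
    (hPdisj : ∀ i i', i ≠ i' → ∀ v, v ∈ (P i).support → v ∉ (P i').support)
    (T : Fin b → SimpleGraph.Subgraph G) (hT : ∀ j, (T j).coe.IsTree)
    (hTdisj : ∀ j j', j ≠ j' → Disjoint (T j).verts (T j').verts)
    (hmeet : ∀ i j, ∃ v, v ∈ (P i).support ∧ v ∈ (T j).verts) :
    IsBramble G {S | ∃ i j, S = {v | v ∈ (P i).support} ∪ (T j).verts} ∧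
    ∀ W : Finset V,
      (∀ S ∈ {S | ∃ i j, S = {v | v ∈ (P i).support} ∪ (T j).verts}, ∃ v ∈ S, v ∈ W) →
      min a b ≤ W.card :=
  bramble_of_paths_and_trees_general G a b pu pv P hPdisj T hT hTdisj hmeet
end

section
/- Let σ' ≥ 1 and k ≥ 1 be reals and let X be a positive real satisfying X ≤ σ'·k·log₂(X + 1). Then X ≤ 3σ'·k·log₂(σ'(k+1)). -/
lemma three_log_le (x : ℝ) (hx : 0 < x) : 3 * Real.log x ≤ 2 * Real.log 2 * x := by
  have h1 := Real.log_le_sub_one_of_pos (show 0 < x / Real.exp 1 by positivity)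
  rw [Real.log_div (ne_of_gt hx) (Real.exp_ne_zero 1), Real.log_exp] at h1
  -- h1 : log x - 1 ≤ x / exp 1 - 1
  have h2 : Real.log x ≤ x / Real.exp 1 := by linarith
  have he : (2.7182818283 : ℝ) < Real.exp 1 := Real.exp_one_gt_d9
  have hl : (0.6931471803 : ℝ) < Real.log 2 := Real.log_two_gt_d9
  have hepos : (0:ℝ) < Real.exp 1 := Real.exp_pos 1
  have h3 : x / Real.exp 1 * Real.exp 1 = x := div_mul_cancel₀ x (ne_of_gt hepos)
  nlinarith [mul_pos hx (lt_trans (by norm_num) hl), mul_le_mul_of_nonneg_right h2 (le_of_lt hepos)]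

/-- Self-bounding argument: if `X > 0` satisfies `X ≤ σ'·k·log₂(X+1)` with
`σ' ≥ 1` and `k ≥ 1`, then `X ≤ 3σ'·k·log₂(σ'(k+1))`. -/
theorem self_bounding_log (σ' k X : ℝ) (hσ : 1 ≤ σ') (hk : 1 ≤ k) (hX : 0 < X)
    (h : X ≤ σ' * k * Real.logb 2 (X + 1)) :
    X ≤ 3 * σ' * k * Real.logb 2 (σ' * (k + 1)) := by
  set L := Real.logb 2 (X + 1) with hLdef
  have hσk : (0:ℝ) < σ' * k := by positivity
  have hskk : (2:ℝ) ≤ σ' * (k + 1) := by nlinarith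
  have hR : 1 ≤ Real.logb 2 (σ' * (k + 1)) := by
    calc (1:ℝ) = Real.logb 2 2 := (Real.logb_self_eq_one (b := 2) (by norm_num)).symm
      _ ≤ Real.logb 2 (σ' * (k + 1)) :=
        Real.logb_le_logb_of_le (by norm_num) (by norm_num) hskk
  by_cases hL1 : L ≤ 1
  · nlinarith
  · push_neg at hL1
    have hL0 : 0 < L := by linarith
    have hX1 : X + 1 ≤ σ' * (k + 1) * L := by nlinarith
    have hmono : L ≤ Real.logb 2 (σ' * (k + 1) * L) :=
      Real.logb_le_logb_of_le (by norm_num) (by positivity) hX1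
    have hsplit : Real.logb 2 (σ' * (k + 1) * L) =
        Real.logb 2 (σ' * (k + 1)) + Real.logb 2 L := by
      rw [Real.logb_mul (by positivity) (ne_of_gt hL0)]
    have hlogL : Real.logb 2 L ≤ 2 / 3 * L := by
      have := three_log_le L hL0
      rw [Real.logb, div_le_iff₀ (Real.log_pos (by norm_num))]
      nlinarith [Real.log_pos (show (1:ℝ) < 2 by norm_num)]
    have hLle : L ≤ 3 * Real.logb 2 (σ' * (k + 1)) := by
      rw [hsplit] at hmono; linarith
    nlinarith
end

section
/- Let G_bip be a bipartite graph with parts U and S, let f, g be positive integers with g = f², and let X ⊆ U be the set of vertices of U with degree greater than f. If |X| ≥ f, or if |X| < f and the vertices of U \ X collectively have at least g neighbors in S, then G_bip contains a matching of size f. -/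
open Finset

/-- Greedy matching for high-degree vertices: if every vertex of `V` has degree at
least `k` and `|V| ≥ k`, there is a matching of size `k` inside `V`. -/
lemma aux_highdeg {U S : Type} [Fintype U] [Fintype S] [DecidableEq U] [DecidableEq S]
    (Adj : U → S → Prop) [∀ u s, Decidable (Adj u s)] [Nonempty S] :
    ∀ (k : ℕ) (V : Finset U), (∀ u ∈ V, k ≤ (univ.filter fun s => Adj u s).card) →
      k ≤ V.card →
      ∃ (us : Finset U) (m : U → S), us ⊆ V ∧ us.card = k ∧
        (∀ u ∈ us, Adj u (m u)) ∧ Set.InjOn m ↑us := by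
  intro k
  induction k with
  | zero =>
    intro V _ _
    exact ⟨∅, fun _ => Classical.arbitrary S, empty_subset _, rfl, by simp, by simp⟩
  | succ k ih =>
    intro V hdeg hcard
    obtain ⟨u, hu⟩ : V.Nonempty := card_pos.mp (lt_of_lt_of_le (Nat.succ_pos k) hcard)
    obtain ⟨us, m, hsub, hc, hadj, hinj⟩ := ih (V.erase u)
      (fun v hv => le_trans (Nat.le_succ k) (hdeg v (mem_of_mem_erase hv)))
      (by rw [card_erase_of_mem hu]; omega)
    have himg : (us.image m).card ≤ k := hc ▸ card_image_le
    have hdegu := hdeg u hu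
    have hne : ((univ.filter fun s => Adj u s) \ us.image m).Nonempty := by
      apply card_pos.mp
      have := card_le_card_sdiff_add_card (s := univ.filter fun s => Adj u s)
        (t := us.image m)
      omega
    obtain ⟨s, hs⟩ := hne
    rw [mem_sdiff, mem_filter] at hs
    have husnot : u ∉ us := fun h => (mem_erase.mp (hsub h)).1 rfl
    refine ⟨insert u us, Function.update m u s, ?_, ?_, ?_, ?_⟩
    · exact insert_subset hu (hsub.trans (erase_subset _ _))
    · rw [card_insert_of_notMem husnot, hc]
    · intro v hv
      rcases mem_insert.mp hv with rfl | hv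
      · simpa using hs.1.2
      · have hvu : v ≠ u := ne_of_mem_erase (hsub hv)
        rw [Function.update_of_ne hvu]
        exact hadj v hv
    · intro a ha b hb hab
      simp only [coe_insert, Set.mem_insert_iff, mem_coe] at ha hb
      rcases ha with rfl | ha <;> rcases hb with rfl | hb
      all_goals try (have hau := ne_of_mem_erase (hsub ha))
      all_goals try (have hbu := ne_of_mem_erase (hsub hb))
      · rfl
      · rw [Function.update_self, Function.update_of_ne hbu] at hab
        exact absurd (mem_image_of_mem m hb) (hab ▸ hs.2)
      · rw [Function.update_self, Function.update_of_ne hau] at hab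
        exact absurd (mem_image_of_mem m ha) (hab.symm ▸ hs.2)
      · rw [Function.update_of_ne hau,
          Function.update_of_ne hbu] at hab
        exact hinj ha hb hab

/-- Greedy matching for low-degree vertices: if every vertex of `V` has degree at most
`f` and `V` dominates a set `T` of at least `k * f` vertices, there is a matching of
size `k` inside `V` with values in `T`. -/
lemma aux_lowdeg {U S : Type} [Fintype U] [Fintype S] [DecidableEq U] [DecidableEq S]
    (Adj : U → S → Prop) [∀ u s, Decidable (Adj u s)] [Nonempty S]
    (f : ℕ) (hf : 0 < f) :
    ∀ (k : ℕ) (V : Finset U) (T : Finset S),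
      (∀ u ∈ V, (univ.filter fun s => Adj u s).card ≤ f) →
      (∀ s ∈ T, ∃ u ∈ V, Adj u s) →
      k * f ≤ T.card →
      ∃ (us : Finset U) (m : U → S), us ⊆ V ∧ us.card = k ∧
        (∀ u ∈ us, Adj u (m u)) ∧ (∀ u ∈ us, m u ∈ T) ∧ Set.InjOn m ↑us := by
  intro k
  induction k with
  | zero =>
    intro V T _ _ _
    exact ⟨∅, fun _ => Classical.arbitrary S, empty_subset _, rfl, by simp, by simp, by simp⟩
  | succ k ih =>
    intro V T hdeg hcov hcard
    obtain ⟨s, hsT⟩ : T.Nonempty := card_pos.mp (by nlinarith)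
    obtain ⟨u, huV, huadj⟩ := hcov s hsT
    set N : Finset S := univ.filter fun s' => Adj u s' with hN
    have hdegu : N.card ≤ f := hdeg u huV
    obtain ⟨us, m, hsub, hc, hadj, hval, hinj⟩ := ih (V.erase u) (T \ N)
      (fun v hv => hdeg v (mem_of_mem_erase hv))
      (by
        intro s' hs'
        rw [mem_sdiff] at hs'
        obtain ⟨u', hu', hadj'⟩ := hcov s' hs'.1
        refine ⟨u', mem_erase.mpr ⟨?_, hu'⟩, hadj'⟩
        rintro rfl
        exact hs'.2 (by simp [hN, hadj']))
      (by
        have := card_le_card_sdiff_add_card (s := T) (t := N)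
        have : T.card - N.card ≤ (T \ N).card := by omega
        have hk : (k + 1) * f = k * f + f := by ring
        omega)
    have husnot : u ∉ us := fun h => (mem_erase.mp (hsub h)).1 rfl
    have hsN : s ∈ N := by simp [hN, huadj]
    refine ⟨insert u us, Function.update m u s, ?_, ?_, ?_, ?_, ?_⟩
    · exact insert_subset huV (hsub.trans (erase_subset _ _))
    · rw [card_insert_of_notMem husnot, hc]
    · intro v hv
      rcases mem_insert.mp hv with rfl | hv
      · simpa using huadj
      · have hvu : v ≠ u := ne_of_mem_erase (hsub hv)
        rw [Function.update_of_ne hvu]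
        exact hadj v hv
    · intro v hv
      rcases mem_insert.mp hv with rfl | hv
      · simpa using hsT
      · have hvu : v ≠ u := ne_of_mem_erase (hsub hv)
        rw [Function.update_of_ne hvu]
        exact (mem_sdiff.mp (hval v hv)).1
    · intro a ha b hb hab
      simp only [coe_insert, Set.mem_insert_iff, mem_coe] at ha hb
      rcases ha with rfl | ha <;> rcases hb with rfl | hb
      all_goals try (have hau := ne_of_mem_erase (hsub ha))
      all_goals try (have hbu := ne_of_mem_erase (hsub hb))
      · rfl
      · rw [Function.update_self, Function.update_of_ne hbu] at hab
        exact absurd hsN (hab ▸ (mem_sdiff.mp (hval b hb)).2)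
      · rw [Function.update_self, Function.update_of_ne hau] at hab
        exact absurd hsN (hab.symm ▸ (mem_sdiff.mp (hval a ha)).2)
      · rw [Function.update_of_ne hau,
          Function.update_of_ne hbu] at hab
        exact hinj ha hb hab

/-- Matching extraction in a bipartite graph with parts `U` and `S` (adjacency `Adj`).
Let `f, g` be positive integers with `g = f²` and let `X` be the set of vertices of `U`
of degree greater than `f`. If `|X| ≥ f`, or `|X| < f` and the vertices of `U \ X`
collectively have at least `g` neighbors in `S`, then there is a matching of size `f`:
`f` vertices of `U` matched injectively to adjacent vertices of `S`. -/
theorem bipartite_matching_of_degrees {U S : Type} [Fintype U] [Fintype S]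
    [DecidableEq U] [DecidableEq S]
    (Adj : U → S → Prop) [∀ u s, Decidable (Adj u s)]
    (f g : ℕ) (hf : 0 < f) (hg : g = f ^ 2)
    (X : Finset U) (hX : X = univ.filter fun u => f < (univ.filter fun s => Adj u s).card)
    (hcase : f ≤ X.card ∨
      (X.card < f ∧ g ≤ (univ.filter fun s => ∃ u, u ∉ X ∧ Adj u s).card)) :
    ∃ (us : Finset U) (m : U → S), us.card = f ∧ (∀ u ∈ us, Adj u (m u)) ∧
      Set.InjOn m ↑us := by
  rcases hcase with hbig | ⟨hsmall, hT⟩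
  · -- case 1: many high-degree vertices
    obtain ⟨X', hX'sub, hX'card⟩ := exists_subset_card_eq hbig
    have hdeg : ∀ u ∈ X', f ≤ (univ.filter fun s => Adj u s).card := by
      intro u hu
      have := hX'sub hu
      rw [hX, mem_filter] at this
      exact this.2.le
    have hNS : Nonempty S := by
      obtain ⟨u, hu⟩ : X'.Nonempty := card_pos.mp (hX'card ▸ hf)
      have h1 : 0 < (univ.filter fun s => Adj u s).card := lt_of_lt_of_le hf (hdeg u hu)
      obtain ⟨s, _⟩ := card_pos.mp h1
      exact ⟨s⟩
    obtain ⟨us, m, _, hc, hadj, hinj⟩ :=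
      aux_highdeg Adj f X' hdeg hX'card.ge
    exact ⟨us, m, hc, hadj, hinj⟩
  · -- case 2: low-degree vertices dominate many vertices
    set T : Finset S := univ.filter fun s => ∃ u, u ∉ X ∧ Adj u s with hTdef
    have hTcard : f * f ≤ T.card := by
      have : g = f * f := by rw [hg]; ring
      omega
    have hNS : Nonempty S := by
      obtain ⟨s, _⟩ := card_pos.mp (lt_of_lt_of_le (by positivity) hTcard)
      exact ⟨s⟩
    obtain ⟨us, m, _, hc, hadj, _, hinj⟩ :=
      aux_lowdeg Adj f hf f (univ.filter fun u => u ∉ X) T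
        (by
          intro u hu
          rw [mem_filter] at hu
          have := hu.2
          rw [hX, mem_filter] at this
          push_neg at this
          exact this (mem_univ u))
        (by
          intro s hs
          rw [hTdef, mem_filter] at hs
          obtain ⟨u, huX, huadj⟩ := hs.2
          exact ⟨u, mem_filter.mpr ⟨mem_univ u, huX⟩, huadj⟩)
        hTcard
    exact ⟨us, m, hc, hadj, hinj⟩
end

section
/- Let m ≥ 1 and let an a×b-orchard have a ≥ 2 horizontal paths. Then each vertical tree of the orchard contains at most 1 + 3(a−2) vertical sections; in particular fewer than a² vertical sections. -/
/-!
Degree counting in the vertical tree `T`. Let `P = ⋃ i, S i`, let `W` be the vertices off `P` of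
degree at least 3, and `R` the remaining vertices, which have degree exactly 2. In a forest the
degrees over a vertex set `A` satisfy `∑_A deg + 2 c(A) = 2 |A| + e(A, Aᶜ)`, where `c(A)` counts
the components of `T[A]`. For `A = R` this gives `e(R, Rᶜ) = 2 k`, with `k` the number of
components of `T[R]`; for `A = P ∪ W` it then gives `c(P ∪ W) = k + 1`, and `c(P ∪ W) ≤ a + |W|`
because each `S i` is connected. On the other hand the degree sum over `P ∪ W` is
`2 |P ∪ W| - 2`, while each `S i` contributes at least `2 |S i| - 1` (a subtree with an edge
leaving it) and each vertex of `W` at least 3, whence `|W| ≤ a - 2`. Altogether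
`|W| + k ≤ 2 |W| + a - 1 ≤ 1 + 3 (a - 2)`.
-/

open Finset Function

namespace SimpleGraph

variable {V : Type*} {G : SimpleGraph V}

theorem card_connectedComponent_induce_iUnion_le {ι : Type*} [Finite ι] {B : ι → Set V}
    (hB : ∀ i, (G.induce (B i)).Connected) :
    Nat.card (G.induce (⋃ i, B i)).ConnectedComponent ≤ Nat.card ι := by
  let base (i : ι) : B i := (hB i).nonempty.some
  refine Nat.card_le_card_of_surjective (fun i => (G.induce (⋃ i, B i)).connectedComponentMk
    (Set.inclusion (Set.subset_iUnion B i) (base i))) fun C => ?_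
  induction C using ConnectedComponent.ind with
  | h v =>
    obtain ⟨i, hi⟩ := Set.mem_iUnion.mp v.2
    exact ⟨i, ConnectedComponent.sound
      (((hB i).preconnected (base i) ⟨v, hi⟩).map (G.induceHomOfLE (Set.subset_iUnion B i)).toHom)⟩

theorem card_interedges_comm [DecidableRel G.Adj] (A B : Finset V) :
    #(G.interedges A B) = #(G.interedges B A) :=
  have := G.symm
  Rel.card_interedges_comm _ _

section Fintype

variable [Fintype V] [DecidableRel G.Adj]

theorem ncard_neighborSet_eq_degree (v : V) : (G.neighborSet v).ncard = G.degree v := by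
  rw [← Nat.card_coe_set_eq, Nat.card_eq_fintype_card, card_neighborSet_eq_degree]

theorem IsTree.sum_degree_add_two (hG : G.IsTree) : ∑ v, G.degree v + 2 = 2 * Fintype.card V := by
  rw [sum_degrees_eq_twice_card_edges, ← hG.card_edgeFinset]
  ring

variable [DecidableEq V]

theorem Connected.nonempty_interedges_compl (hG : G.Connected) {A : Finset V} (hA : A.Nonempty)
    (hAc : Aᶜ.Nonempty) : (G.interedges A Aᶜ).Nonempty := by
  obtain ⟨u, hu⟩ := hA
  obtain ⟨x, hx⟩ := hAc
  obtain ⟨d, -, hd, hd'⟩ := (hG u x).some.exists_boundary_dart A hu (by simpa using hx)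
  exact ⟨(d.fst, d.snd), G.mk_mem_interedges_iff.mpr ⟨hd, mem_compl.mpr hd', d.adj⟩⟩

theorem card_interedges_eq_sum (A B : Finset V) :
    #(G.interedges A B) = ∑ v ∈ A, #(G.neighborFinset v ∩ B) := by
  rw [interedges_def, card_filter, sum_product]
  refine sum_congr rfl fun v _ => ?_
  rw [← card_filter]
  congr 1
  ext w; simp [and_comm]

theorem sum_degree_eq_two_mul_card_edgeFinset_induce_add_card_interedges (A : Finset V) :
    ∑ v ∈ A, G.degree v = 2 * #(G.induce A).edgeFinset + #(G.interedges A Aᶜ) := by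
  have hsplit (v : V) : G.degree v = #(G.neighborFinset v ∩ A) + #(G.neighborFinset v ∩ Aᶜ) := by
    rw [← card_neighborFinset_eq_degree, ← card_union_of_disjoint
      (disjoint_compl_right.mono inter_subset_right inter_subset_right), ← inter_union_distrib_left,
      union_compl, inter_univ]
  have hinduce (v : (A : Set V)) : (G.induce A).degree v = #(G.neighborFinset v ∩ A) := by
    have h := congrArg card (map_neighborFinset_induce (G := G) v)
    rw [card_map, Finset.toFinset_coe] at h
    rw [← h, card_neighborFinset_eq_degree]
    congr!
  rw [← sum_degrees_eq_twice_card_edges, card_interedges_eq_sum, sum_congr rfl fun v _ => hsplit v,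
    sum_add_distrib, ← sum_coe_sort A]
  simp [hinduce]

theorem IsAcyclic.sum_degree_add_two_of_coe_eq_supp (hG : G.IsAcyclic) {C : G.ConnectedComponent}
    {A : Finset V} (hA : (A : Set V) = C.supp) : ∑ v ∈ A, G.degree v + 2 = 2 * #A := by
  have htree : (G.induce (A : Set V)).IsTree := hA ▸ hG.isTree_connectedComponent C
  have hcut : G.interedges A Aᶜ = ∅ := by
    refine eq_empty_iff_forall_notMem.mpr fun ⟨v, w⟩ h => ?_
    obtain ⟨hv, hw, hvw⟩ := (G.mk_mem_interedges_iff).mp h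
    rw [← mem_coe, hA] at hv
    exact mem_compl.mp hw (by rw [← mem_coe, hA]; exact (C.mem_supp_congr_adj hvw).mp hv)
  have hcard := htree.card_edgeFinset
  simp only [Finset.coe_sort_coe, Fintype.card_coe] at hcard
  rw [sum_degree_eq_two_mul_card_edgeFinset_induce_add_card_interedges, hcut, card_empty, ← hcard]
  ring

theorem IsAcyclic.card_edgeFinset_add_card_connectedComponent (hG : G.IsAcyclic) :
    #G.edgeFinset + Nat.card G.ConnectedComponent = Fintype.card V := by
  classical
  have hcomp (C : G.ConnectedComponent) :
      ∑ v with G.connectedComponentMk v = C, G.degree v + 2 =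
        2 * #{v | G.connectedComponentMk v = C} :=
    hG.sum_degree_add_two_of_coe_eq_supp (C := C) (by ext; simp [ConnectedComponent.mem_supp_iff])
  have h := Finset.sum_congr rfl fun C (_ : C ∈ univ) => hcomp C
  rw [sum_add_distrib, ← mul_sum] at h
  rw [sum_fiberwise univ G.connectedComponentMk (G.degree ·), sum_degrees_eq_twice_card_edges,
    ← card_eq_sum_card_fiberwise (f := G.connectedComponentMk) (t := univ) (by simp), sum_const,
    card_univ, card_univ, smul_eq_mul] at h
  rw [Nat.card_eq_fintype_card]
  omega

theorem IsAcyclic.sum_degree_add_two_mul_card_connectedComponent_induce (hG : G.IsAcyclic)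
    (A : Finset V) :
    ∑ v ∈ A, G.degree v + 2 * Nat.card (G.induce A).ConnectedComponent =
      2 * #A + #(G.interedges A Aᶜ) := by
  have h := (hG.induce A).card_edgeFinset_add_card_connectedComponent
  simp only [Finset.coe_sort_coe, Fintype.card_coe] at h
  rw [sum_degree_eq_two_mul_card_edgeFinset_induce_add_card_interedges]
  omega

theorem IsTree.two_mul_card_le_sum_degree_add_one (hG : G.IsTree) {A : Finset V}
    (hA : (G.induce A).Connected) (hAc : Aᶜ.Nonempty) : 2 * #A ≤ ∑ v ∈ A, G.degree v + 1 := by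
  have h := hG.isAcyclic.sum_degree_add_two_mul_card_connectedComponent_induce A
  obtain ⟨v⟩ := hA.nonempty
  have hc : Nat.card (G.induce A).ConnectedComponent = 1 :=
    Nat.card_eq_one_iff_unique.mpr
      ⟨hA.preconnected.subsingleton_connectedComponent, ⟨(G.induce A).connectedComponentMk v⟩⟩
  have hb := (hG.connected.nonempty_interedges_compl ⟨v, v.2⟩ hAc).card_pos
  omega

theorem IsTree.sum_degree_add_two_of_degree_eq_two (hG : G.IsTree) {K : Finset V}
    (h2 : ∀ v ∉ K, G.degree v = 2) : ∑ v ∈ K, G.degree v + 2 = 2 * #K := by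
  have h := hG.sum_degree_add_two
  rw [← sum_add_sum_compl K, sum_congr rfl fun v hv => h2 v (mem_compl.mp hv), sum_const,
    smul_eq_mul, ← card_add_card_compl K] at h
  omega

theorem IsTree.card_connectedComponent_induce_compl_add_one (hG : G.IsTree) {K : Finset V}
    (h2 : ∀ v ∉ K, G.degree v = 2) :
    Nat.card (G.induce (Kᶜ : Finset V)).ConnectedComponent + 1 =
      Nat.card (G.induce K).ConnectedComponent := by
  have hK := hG.isAcyclic.sum_degree_add_two_mul_card_connectedComponent_induce K
  have hKc := hG.isAcyclic.sum_degree_add_two_mul_card_connectedComponent_induce Kᶜ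
  rw [sum_congr rfl fun v hv => h2 v (mem_compl.mp hv), sum_const, smul_eq_mul,
    compl_compl, card_interedges_comm] at hKc
  have := hG.sum_degree_add_two_of_degree_eq_two h2
  omega

theorem IsTree.two_mul_card_biUnion_le {ι : Type*} [Fintype ι] (hG : G.IsTree) {S : ι → Finset V}
    (hSconn : ∀ i, (G.induce (S i : Set V)).Connected) (hSc : ∀ i, (S i)ᶜ.Nonempty)
    (hSdisj : Pairwise (Disjoint on S)) :
    2 * #(univ.biUnion S) ≤ ∑ v ∈ univ.biUnion S, G.degree v + Fintype.card ι := by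
  rw [card_biUnion fun i _ j _ hij => hSdisj hij, sum_biUnion fun i _ j _ hij => hSdisj hij,
    mul_sum, ← card_univ, card_eq_sum_ones, ← sum_add_distrib]
  exact sum_le_sum fun i _ => hG.two_mul_card_le_sum_degree_add_one (hSconn i) (hSc i)

end Fintype

end SimpleGraph

section Orchard

variable {V ι : Type*} [Fintype V] {T : SimpleGraph V}

def branchVertices (T : SimpleGraph V) (P : Set V) : Set V :=
  {w | w ∉ P ∧ 3 ≤ (T.neighborSet w).ncard}

theorem degree_eq_two_of_notMem_union_branchVertices [DecidableRel T.Adj] {P : Set V}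
    (hleaf : ∀ w, (T.neighborSet w).ncard ≤ 1 → w ∈ P) {v : V}
    (hv : v ∉ P ∪ branchVertices T P) : T.degree v = 2 := by
  have hdeg := T.ncard_neighborSet_eq_degree v
  simp only [branchVertices, Set.mem_union, Set.mem_ofPred_eq, not_or, not_and, not_le] at hv
  have := mt (hleaf v) hv.1
  have := hv.2 hv.1
  omega

theorem ncard_branchVertices_add_two_le [Fintype ι] (hT : T.IsTree) {S : ι → Set V}
    (hι : 2 ≤ Fintype.card ι) (hSne : ∀ i, (S i).Nonempty)
    (hSconn : ∀ i, (T.induce (S i)).Connected) (hSdisj : ∀ i j, i ≠ j → Disjoint (S i) (S j))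
    (hleaf : ∀ w, (T.neighborSet w).ncard ≤ 1 → w ∈ ⋃ i, S i) :
    (branchVertices T (⋃ i, S i)).ncard + 2 ≤ Fintype.card ι := by
  classical
  set W := branchVertices T (⋃ i, S i)
  have hSc (i : ι) : ((S i).toFinset)ᶜ.Nonempty := by
    obtain ⟨j, hji⟩ := Fintype.exists_ne_of_one_lt_card hι i
    obtain ⟨v, hv⟩ := hSne j
    exact ⟨v, by simpa using Set.disjoint_left.mp (hSdisj j i hji) hv⟩
  have hP := hT.two_mul_card_biUnion_le (S := fun i => (S i).toFinset)
    (fun i => by rw [Set.coe_toFinset]; exact hSconn i) hSc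
    fun i j hij => Set.disjoint_toFinset.mpr (hSdisj i j hij)
  rw [← Set.toFinset_iUnion] at hP
  have hK := hT.sum_degree_add_two_of_degree_eq_two (K := ((⋃ i, S i) ∪ W).toFinset)
    fun v hv => degree_eq_two_of_notMem_union_branchVertices hleaf (by simpa using hv)
  have hPW : Disjoint (⋃ i, S i).toFinset W.toFinset :=
    Set.disjoint_toFinset.mpr (Set.disjoint_left.mpr fun v hv hw => hw.1 hv)
  rw [Set.toFinset_union, sum_union hPW, card_union_of_disjoint hPW] at hK
  have hW : #W.toFinset • 3 ≤ ∑ v ∈ W.toFinset, T.degree v :=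
    card_nsmul_le_sum _ _ _ fun v hv =>
      T.ncard_neighborSet_eq_degree v ▸ (Set.mem_toFinset.mp hv).2
  rw [smul_eq_mul] at hW
  rw [Set.ncard_eq_toFinset_card']
  omega

theorem card_connectedComponent_add_one_le [Finite ι] (hT : T.IsTree) {S : ι → Set V}
    (hSconn : ∀ i, (T.induce (S i)).Connected)
    (hleaf : ∀ w, (T.neighborSet w).ncard ≤ 1 → w ∈ ⋃ i, S i) :
    Nat.card (T.induce ((⋃ i, S i) ∪ branchVertices T (⋃ i, S i))ᶜ).ConnectedComponent + 1 ≤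
      Nat.card ι + (branchVertices T (⋃ i, S i)).ncard := by
  classical
  set W := branchVertices T (⋃ i, S i)
  have h := hT.card_connectedComponent_induce_compl_add_one (K := ((⋃ i, S i) ∪ W).toFinset)
    fun v hv => degree_eq_two_of_notMem_union_branchVertices hleaf (by simpa using hv)
  rw [Finset.coe_compl, Set.coe_toFinset] at h
  have hcover := SimpleGraph.card_connectedComponent_induce_iUnion_le
    (B := Sum.elim S fun w : W => {w.1}) (G := T) fun
      | .inl i => hSconn i
      | .inr w => by simp
  rw [Set.iUnion_sumElim, Set.iUnion_singleton_eq_range, Subtype.range_coe, Nat.card_sum,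
    Nat.card_coe_set_eq] at hcover
  omega

end Orchard

/-- Bound on the vertical sections on one vertical tree of an `a×b`-orchard, `a ≥ 2`.
`T` is a vertical tree; `S i` is the (nonempty, connected-in-`T`) intersection of `T`
with the `i`-th horizontal path, the sets `S i` being pairwise disjoint; every leaf of
`T` lies on some horizontal path. Writing `P = ⋃ i, S i` and
`W = {w ∉ P | deg_T w ≥ 3}`, the number of vertical sections of `T`, i.e.
`|W|` plus the number of components of `T − (P ∪ W)`, is at most `1 + 3(a−2)`;
in particular it is less than `a²`. -/
theorem vertical_sections_bound {VT : Type} [Fintype VT]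
    (T : SimpleGraph VT) (hT : T.IsTree)
    (a : ℕ) (ha : 2 ≤ a)
    (S : Fin a → Set VT)
    (hSne : ∀ i, (S i).Nonempty)
    (hSconn : ∀ i, (T.induce (S i)).Connected)
    (hSdisj : ∀ i j, i ≠ j → Disjoint (S i) (S j))
    (hleaf : ∀ w : VT, (T.neighborSet w).ncard ≤ 1 → w ∈ ⋃ i, S i) :
    (Set.ncard {w : VT | w ∉ (⋃ i, S i) ∧ 3 ≤ (T.neighborSet w).ncard} +
        Nat.card ((T.induce
          ((⋃ i, S i) ∪ {w : VT | w ∉ (⋃ i, S i) ∧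
            3 ≤ (T.neighborSet w).ncard})ᶜ).ConnectedComponent)
      ≤ 1 + 3 * (a - 2)) ∧
    (Set.ncard {w : VT | w ∉ (⋃ i, S i) ∧ 3 ≤ (T.neighborSet w).ncard} +
        Nat.card ((T.induce
          ((⋃ i, S i) ∪ {w : VT | w ∉ (⋃ i, S i) ∧
            3 ≤ (T.neighborSet w).ncard})ᶜ).ConnectedComponent)
      < a ^ 2) := by
  have hW := ncard_branchVertices_add_two_le hT (by simpa using ha) hSne hSconn hSdisj hleaf
  have hk := card_connectedComponent_add_one_le hT hSconn hleaf
  rw [Fintype.card_fin] at hW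
  rw [Nat.card_eq_fintype_card (α := Fin a), Fintype.card_fin] at hk
  unfold branchVertices at hW hk
  have hbound : 1 + 3 * (a - 2) < a ^ 2 := by
    obtain ⟨b, rfl⟩ := Nat.exists_eq_add_of_le' ha
    simp only [Nat.add_sub_cancel]
    nlinarith
  exact ⟨by omega, by omega⟩
end
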